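/- arXiv:2303.09633 — 2 statements merged into one kernel-verified Lean document; each statement's English description precedes it below -/
import Mathlib

section
/- Let $G$ be a finitely generated group and $k \geq 2$. If the quotient $\gamma_k(G)/\gamma_{k+1}(G)$ is finitely generated and the abelianization $G^{\mathrm{ab}}$ is finite, then $\gamma_{k-1}(G)/\gamma_k(G)$ is a finitely generated torsion abelian group, hence finite, provided it is finitely generated. -/
/-!
Let `m` be the exponent of `Gᵃᵇ`, so that `g ^ m ∈ [G, G]` for every `g`. If `y ∈ γ_i`, then modulo
`γ_{i+2}` the map `z ↦ [y, z]` is a homomorphism into the centre; an abelian target forces it to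
kill `[G, G]`, so `[y, g] ^ m ≡ [y, g ^ m] ≡ 1`. Central elements of order dividing `m` form a
subgroup, hence `γ_{i+1} / γ_{i+2}` has exponent dividing `m`; a finitely generated abelian group
of finite exponent is finite.
-/

open Subgroup
open scoped commutatorElement

section

-- supplies the `CommGroup` structures on `center H` and on abelian quotients
open scoped IsMulCommutative

variable {G H : Type*} [Group G] [Group H]

def commutatorElementHom (a : H) (ha : ∀ z, ⁅a, z⁆ ∈ center H) : H →* center H where
  toFun z := ⟨⁅a, z⁆, ha z⟩
  map_one' := by simp
  map_mul' z w := by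
    ext
    have hw : z * ⁅a, w⁆ = ⁅a, w⁆ * z := mem_center_iff.mp (ha w) z
    calc ⁅a, z * w⁆ = ⁅a, z⁆ * (z * ⁅a, w⁆ * z⁻¹) := by simp only [commutatorElement_def]; group
      _ = ⁅a, z⁆ * ⁅a, w⁆ := by rw [hw, mul_inv_cancel_right]

theorem commutatorElement_pow_eq_one {a z : H} (ha : ∀ w, ⁅a, w⁆ ∈ center H) {m : ℕ}
    (hz : z ^ m ∈ commutator H) : ⁅a, z⁆ ^ m = 1 := by
  have h := Abelianization.commutator_subset_ker (commutatorElementHom a ha) hz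
  rw [MonoidHom.mem_ker, map_pow] at h
  exact congrArg Subtype.val h

theorem map_mem_commutator (f : G →* H) {g : G} (hg : g ∈ commutator G) : f g ∈ commutator H := by
  have := mem_map_of_mem f hg
  rw [map_commutator_eq] at this
  exact commutator_mono le_top le_top this

theorem mk_mem_center_of_mem_lowerCentralSeries {n : ℕ} {x : G}
    (hx : x ∈ (⊤ : Subgroup G).lowerCentralSeries n) :
    (x : G ⧸ (⊤ : Subgroup G).lowerCentralSeries (n + 1)) ∈ center _ := by
  have h : x ∈ Subgroup.upperCentralSeriesStep ((⊤ : Subgroup G).lowerCentralSeries (n + 1)) :=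
    fun y => commutator_mem_commutator hx (mem_top y)
  rwa [Subgroup.upperCentralSeriesStep_eq_comap_center] at h

theorem pow_mem_lowerCentralSeries_succ {m : ℕ} (hm : ∀ g : G, g ^ m ∈ commutator G) :
    ∀ {n : ℕ} {x : G}, x ∈ (⊤ : Subgroup G).lowerCentralSeries n →
      x ^ m ∈ (⊤ : Subgroup G).lowerCentralSeries (n + 1)
  | 0, x, _ => hm x
  | n + 1, x, hx => by
    let N := (⊤ : Subgroup G).lowerCentralSeries (n + 2)
    let π := QuotientGroup.mk' N
    let T : Subgroup (G ⧸ N) :=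
      (powMonoidHom m : center (G ⧸ N) →* center (G ⧸ N)).ker.map (center (G ⧸ N)).subtype
    suffices h : (⊤ : Subgroup G).lowerCentralSeries (n + 1) ≤ T.comap π by
      obtain ⟨z, hz, hzx⟩ := h hx
      rw [← QuotientGroup.eq_one_iff, QuotientGroup.mk_pow, ← QuotientGroup.mk'_apply, ← hzx]
      exact congrArg Subtype.val hz
    refine commutator_le.mpr fun y hy g _ => ?_
    have hcentral : ∀ z, ⁅π y, z⁆ ∈ center (G ⧸ N) := QuotientGroup.forall_mk.mpr fun g => by
      rw [← QuotientGroup.mk'_apply, ← map_commutatorElement]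
      exact mk_mem_center_of_mem_lowerCentralSeries (commutator_mem_commutator hy (mem_top g))
    refine ⟨⟨_, hcentral (π g)⟩, ?_, (map_commutatorElement π y g).symm⟩
    ext
    exact commutatorElement_pow_eq_one hcentral (map_pow π g m ▸ map_mem_commutator π (hm g))

theorem pow_exponent_abelianization_mem_commutator (g : G) :
    g ^ Monoid.exponent (Abelianization G) ∈ commutator G := by
  rw [← Abelianization.ker_of, MonoidHom.mem_ker, map_pow, Monoid.pow_exponent_eq_one]

theorem finite_quotient_subgroupOf_of_pow_mem {A B : Subgroup G} [B.Normal]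
    [Group.FG (A ⧸ B.subgroupOf A)] (hAB : ⁅A, A⁆ ≤ B) {m : ℕ} (hm : 0 < m)
    (hpow : ∀ x ∈ A, x ^ m ∈ B) :
    Finite (A ⧸ B.subgroupOf A) := by
  have : IsMulCommutative (A ⧸ B.subgroupOf A) := by
    refine Normal.quotient_commutative_iff_commutator_le.mpr fun x hx => ?_
    rw [mem_subgroupOf]
    apply hAB
    have := mem_map_of_mem A.subtype hx
    rwa [map_commutator_eq, range_subtype] at this
  refine CommGroup.finite_of_fg_isMulTorsion _ (ExponentExists.isMulTorsion ⟨m, hm, ?_⟩)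
  refine QuotientGroup.forall_mk.mpr fun x => ?_
  rw [← QuotientGroup.mk_pow, QuotientGroup.eq_one_iff, mem_subgroupOf, coe_pow]
  exact hpow x x.2

end

theorem gamma_quotient_finite_general {G : Type*} [Group G] (k : ℕ) (hk : 2 ≤ k)
    (hab : Finite (Abelianization G))
    (hfgk1 : Group.FG
      (((⊤ : Subgroup G).lowerCentralSeries (k - 2)) ⧸
        ((⊤ : Subgroup G).lowerCentralSeries (k - 1)).subgroupOf ((⊤ : Subgroup G).lowerCentralSeries (k - 2)))) :
    Finite
      (((⊤ : Subgroup G).lowerCentralSeries (k - 2)) ⧸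
        ((⊤ : Subgroup G).lowerCentralSeries (k - 1)).subgroupOf ((⊤ : Subgroup G).lowerCentralSeries (k - 2))) := by
  obtain ⟨n, rfl⟩ := Nat.exists_eq_add_of_le' hk
  rw [Nat.add_sub_cancel, show n + 2 - 1 = n + 1 from rfl] at hfgk1 ⊢
  exact finite_quotient_subgroupOf_of_pow_mem (commutator_mono le_rfl le_top)
    (Nat.pos_of_ne_zero Monoid.exponent_ne_zero_of_finite)
    fun _ => pow_mem_lowerCentralSeries_succ pow_exponent_abelianization_mem_commutator

/-- If `G` is a finitely generated group, `k ≥ 2`, the quotient `γ_k(G)/γ_{k+1}(G)` is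
finitely generated, the abelianization `Gᵃᵇ` is finite, and `γ_{k-1}(G)/γ_k(G)` is
finitely generated, then `γ_{k-1}(G)/γ_k(G)` is finite (being a finitely generated
torsion abelian group).  Here `γ_i(G) = lowerCentralSeries G (i-1)`. -/
theorem gamma_quotient_finite {G : Type*} [Group G] (hfg : Group.FG G) (k : ℕ) (hk : 2 ≤ k)
    (hfgk : Group.FG
      (((⊤ : Subgroup G).lowerCentralSeries (k - 1)) ⧸
        ((⊤ : Subgroup G).lowerCentralSeries k).subgroupOf ((⊤ : Subgroup G).lowerCentralSeries (k - 1))))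
    (hab : Finite (Abelianization G))
    (hfgk1 : Group.FG
      (((⊤ : Subgroup G).lowerCentralSeries (k - 2)) ⧸
        ((⊤ : Subgroup G).lowerCentralSeries (k - 1)).subgroupOf ((⊤ : Subgroup G).lowerCentralSeries (k - 2)))) :
    Finite
      (((⊤ : Subgroup G).lowerCentralSeries (k - 2)) ⧸
        ((⊤ : Subgroup G).lowerCentralSeries (k - 1)).subgroupOf ((⊤ : Subgroup G).lowerCentralSeries (k - 2))) :=
  gamma_quotient_finite_general k hk hab hfgk1
end

section
/- Let $G$ be a group and $n \geq 1$ such that every subgroup of $G$ is finitely generated and $G$ is solvable (so $G$ is polycyclic), and let $1 \to N \to H \to G \to 1$ be an extension with $N \leq Z_n(H)$. Then $\gamma_{n+1}(H)$ is an extension of an abelian group by a polycyclic group; in particular, if additionally $\gamma_{n+1}(H) \cap N$ is finitely generated, then $\gamma_{n+1}(H)$ is polycyclic. -/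
def IsPolycyclic (G : Type*) [Group G] : Prop :=
  IsSolvable G ∧ ∀ H : Subgroup G, H.FG

/-!
By the three subgroups lemma, `[γ_{i+1}(H), Z_{i+j}(H)] ≤ Z_j(H)`, where
`γ_{i+1}(H) = lowerCentralSeries ⊤ i`; for `i = n`, `j = 0` this says
that `γ_{n+1}(H)` centralises `Z_n(H) ⊇ N`, so `A = γ_{n+1}(H) ∩ N` is abelian. The quotient
`γ_{n+1}(H) / A` embeds in `G` and is therefore polycyclic. If `A` is finitely generated then,
being abelian, all its subgroups are, and polycyclicity passes to the extension of `A` by a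
polycyclic group.
-/

namespace Subgroup

variable {G Q : Type*} [Group G] [Group Q]

theorem FG.map {K : Subgroup G} (hK : K.FG) (f : G →* Q) : (K.map f).FG := by
  rw [fg_iff_submonoid_fg] at hK ⊢
  exact hK.map f

theorem FG.of_map_injective {K : Subgroup G} (f : G →* Q) (hf : Function.Injective f)
    (hK : (K.map f).FG) : K.FG := by
  rw [fg_iff_submonoid_fg] at hK ⊢
  exact hK.map_injective f hf

theorem fg_of_fg_map_of_fg_inf_ker (f : G →* Q) {K : Subgroup G} (hmap : (K.map f).FG)
    (hker : (K ⊓ f.ker).FG) : K.FG := by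
  obtain ⟨S, hS⟩ := hker
  obtain ⟨T, hTK, hTfin, hT⟩ : ∃ T ⊆ (K : Set G), T.Finite ∧ closure (f '' T) = K.map f := by
    obtain ⟨T, hT⟩ := hmap
    refine Set.exists_subset_image_finite_and (p := fun t => closure t = K.map f) |>.mp
      ⟨T, ?_, T.finite_toSet, hT⟩
    rw [← coe_map, ← hT]
    exact subset_closure
  rw [fg_iff]
  refine ⟨S ∪ T, le_antisymm ?_ ?_, S.finite_toSet.union hTfin⟩
  · rw [closure_le, Set.union_subset_iff]
    exact ⟨fun x hx => mem_inf.mp (hS ▸ subset_closure hx) |>.1, hTK⟩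
  · intro k hk
    obtain ⟨c, hc, hck⟩ : f k ∈ (closure T).map f := by
      rw [MonoidHom.map_closure, hT]; exact mem_map_of_mem f hk
    have hcK : c ∈ K := (closure_le K).mpr hTK hc
    have hker : c⁻¹ * k ∈ closure (S : Set G) := by
      rw [hS]; exact mem_inf.mpr ⟨mul_mem (inv_mem hcK) hk, by simp [hck]⟩
    simpa using mul_mem (closure_mono Set.subset_union_right hc)
      (closure_mono Set.subset_union_left hker)

theorem fg_of_commGroup {A : Type*} [CommGroup A] [Group.FG A] (B : Subgroup A) : B.FG := by
  have : Module.Finite ℤ (Additive A) := Module.Finite.iff_addGroup_fg.mpr inferInstance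
  rw [fg_iff_add_fg, ← AddSubgroup.toIntSubmodule_toAddSubgroup B.toAddSubgroup,
    ← Submodule.fg_iff_addSubgroup_fg]
  exact IsNoetherian.noetherian _

theorem FG.of_le_of_comm {A B : Subgroup G} (hA : A.FG) (hcomm : ∀ x y : A, x * y = y * x)
    (hBA : B ≤ A) : B.FG := by
  let : CommGroup A := { A.toGroup with mul_comm := hcomm }
  have : Group.FG A := (Group.fg_iff_subgroup_fg A).mpr hA
  simpa [subgroupOf_map_subtype, inf_of_le_left hBA] using
    (fg_of_commGroup (B.subgroupOf A)).map A.subtype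

theorem commutator_commutator_le_of_rotate {A B C N : Subgroup G} [N.Normal]
    (h1 : ⁅⁅B, C⁆, A⁆ ≤ N) (h2 : ⁅⁅C, A⁆, B⁆ ≤ N) : ⁅⁅A, B⁆, C⁆ ≤ N := by
  have key : ∀ X Y Z : Subgroup G, ⁅⁅X, Y⁆, Z⁆ ≤ N ↔
      ⁅⁅X.map (QuotientGroup.mk' N), Y.map (QuotientGroup.mk' N)⁆,
        Z.map (QuotientGroup.mk' N)⁆ = ⊥ := by
    intro X Y Z
    rw [← map_commutator, ← map_commutator, map_eq_bot_iff, QuotientGroup.ker_mk']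
  exact (key _ _ _).mpr
    (commutator_commutator_eq_bot_of_rotate ((key _ _ _).mp h1) ((key _ _ _).mp h2))

theorem commutator_lowerCentralSeries_upperCentralSeries_le (i j : ℕ) :
    ⁅(⊤ : Subgroup G).lowerCentralSeries i, upperCentralSeries G (i + j)⁆ ≤
      upperCentralSeries G j := by
  induction i generalizing j with
  | zero => simpa using commutator_le_right ⊤ (upperCentralSeries G j)
  | succ i ih =>
    rw [lowerCentralSeries_succ]
    apply commutator_commutator_le_of_rotate
    · calc ⁅⁅⊤, upperCentralSeries G (i + 1 + j)⁆, lowerCentralSeries ⊤ i⁆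
          ≤ ⁅upperCentralSeries G (i + j), lowerCentralSeries ⊤ i⁆ := by
            refine commutator_mono ?_ le_rfl
            rw [commutator_comm, Nat.add_right_comm]
            exact commutator_upperCentralSeries_top_le G (i + j)
        _ ≤ upperCentralSeries G j := by rw [commutator_comm]; exact ih j
    · calc ⁅⁅upperCentralSeries G (i + 1 + j), lowerCentralSeries ⊤ i⁆, ⊤⁆
          ≤ ⁅upperCentralSeries G (j + 1), ⊤⁆ := by
            refine commutator_mono ?_ le_rfl
            rw [commutator_comm, Nat.add_assoc, Nat.add_comm 1 j]
            exact ih (j + 1)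
        _ ≤ upperCentralSeries G j := commutator_upperCentralSeries_top_le G j

theorem commute_of_mem_lowerCentralSeries_of_mem_upperCentralSeries {n : ℕ} {x y : G}
    (hx : x ∈ (⊤ : Subgroup G).lowerCentralSeries n) (hy : y ∈ upperCentralSeries G n) :
    Commute x y := by
  have := commutator_lowerCentralSeries_upperCentralSeries_le n 0
    (commutator_mem_commutator hx hy)
  rwa [upperCentralSeries_zero, mem_bot, commutatorElement_eq_one_iff_commute] at this

end Subgroup

namespace IsPolycyclic

variable {G K : Type*} [Group G] [Group K]

theorem of_injective (hG : IsPolycyclic G) (f : K →* G) (hf : Function.Injective f) :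
    IsPolycyclic K :=
  have : Group.IsSolvable G := hG.1
  ⟨Group.isSolvable_of_isSolvable_injective hf,
    fun _ => Subgroup.FG.of_map_injective f hf (hG.2 _)⟩

theorem of_fg_comm_ker (hG : IsPolycyclic G) (f : K →* G) (hcomm : ∀ x y : f.ker, x * y = y * x)
    (hker : f.ker.FG) : IsPolycyclic K := by
  have : Group.IsSolvable G := hG.1
  have := Group.isSolvable_of_comm hcomm
  refine ⟨Group.isSolvable_of_ker_le_range f.ker.subtype f (by rw [f.ker.range_subtype]),
    fun S => Subgroup.fg_of_fg_map_of_fg_inf_ker f (hG.2 _) ?_⟩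
  exact hker.of_le_of_comm hcomm inf_le_right

end IsPolycyclic

theorem gamma_polycyclic_of_n_central_extension_general {H G : Type*} [Group H] [Group G]
    (hsub : ∀ K : Subgroup G, K.FG) (hsol : IsSolvable G) (n : ℕ)
    (π : H →* G) (hker : π.ker ≤ upperCentralSeries H n) :
    (∃ (A : Subgroup ((⊤ : Subgroup H).lowerCentralSeries n)) (_ : A.Normal),
        (∀ x y : A, x * y = y * x) ∧ IsPolycyclic (((⊤ : Subgroup H).lowerCentralSeries n) ⧸ A)) ∧
      (Subgroup.FG (π.ker.subgroupOf ((⊤ : Subgroup H).lowerCentralSeries n)) →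
        IsPolycyclic ((⊤ : Subgroup H).lowerCentralSeries n)) := by
  set φ := π.comp ((⊤ : Subgroup H).lowerCentralSeries n).subtype
  have hcomm : ∀ x y : φ.ker, x * y = y * x := fun x y =>
    Subtype.ext <| Subtype.ext <|
      Subgroup.commute_of_mem_lowerCentralSeries_of_mem_upperCentralSeries x.1.2 (hker y.2) |>.eq
  have hG : IsPolycyclic G := ⟨hsol, hsub⟩
  exact ⟨⟨φ.ker, inferInstance, hcomm,
      hG.of_injective (QuotientGroup.kerLift φ) (QuotientGroup.kerLift_injective φ)⟩,
    hG.of_fg_comm_ker φ hcomm⟩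

/-- Let `G` be polycyclic (solvable with every subgroup finitely generated), `n ≥ 1`,
and `1 → N → H → G → 1` an extension with `N = ker π ≤ Z_n(H)`.  Then
`γ_{n+1}(H) = lowerCentralSeries H n` is an extension of an abelian group by a
polycyclic group; in particular, if additionally `γ_{n+1}(H) ∩ N` is finitely
generated, then `γ_{n+1}(H)` is polycyclic. -/
theorem gamma_polycyclic_of_n_central_extension {H G : Type*} [Group H] [Group G]
    (hsub : ∀ K : Subgroup G, K.FG) (hsol : IsSolvable G) (n : ℕ) (hn : 1 ≤ n)
    (π : H →* G) (hπ : Function.Surjective π) (hker : π.ker ≤ upperCentralSeries H n) :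
    (∃ (A : Subgroup ((⊤ : Subgroup H).lowerCentralSeries n)) (_ : A.Normal),
        (∀ x y : A, x * y = y * x) ∧ IsPolycyclic (((⊤ : Subgroup H).lowerCentralSeries n) ⧸ A)) ∧
      (Subgroup.FG (π.ker.subgroupOf ((⊤ : Subgroup H).lowerCentralSeries n)) →
        IsPolycyclic ((⊤ : Subgroup H).lowerCentralSeries n)) :=
  gamma_polycyclic_of_n_central_extension_general hsub hsol n π hker
end
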